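/- Define α_t = σ²(1-t)/(t² + (1-t)²σ²), β_t = t²/(t² + (1-t)²σ²), and γ_t = (1-t)/(t² + (1-t)²). If 0 < σ < 1, then for all t ∈ (0,1), γ_t > α_t; moreover, as t → 0⁺, γ_t - α_t = t²(σ⁻² - 1) + O(t³). -/

import Mathlib

/-!
Writing `α_t = (1-t) / (t²/σ² + (1-t)²)` shows that `α_t` is strictly increasing in `σ²` for
`t ∈ (0,1)`, and `γ_t` is its value at `σ = 1`; this gives `γ_t > α_t` for `σ < 1`.
For the expansion, `α_t = 1 + t + (1 - σ⁻²) t² + O(t³)` with an explicit rational remainder,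
and subtracting the case `σ = 1` from the case `σ` leaves `t² (σ⁻² - 1) + O(t³)`.
-/

open Filter Asymptotics

/-- `α_t = σ²(1-t)/(t² + (1-t)² σ²)`. -/
noncomputable def alphaCoef (σ t : ℝ) : ℝ := σ ^ 2 * (1 - t) / (t ^ 2 + (1 - t) ^ 2 * σ ^ 2)

/-- `γ_t = (1-t)/(t² + (1-t)²)`. -/
noncomputable def gammaCoef (t : ℝ) : ℝ := (1 - t) / (t ^ 2 + (1 - t) ^ 2)

theorem gammaCoef_eq_alphaCoef_one (t : ℝ) : gammaCoef t = alphaCoef 1 t := by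
  simp [gammaCoef, alphaCoef]

theorem alphaCoef_denom_pos {σ : ℝ} (hσ : σ ≠ 0) (t : ℝ) : 0 < t ^ 2 + (1 - t) ^ 2 * σ ^ 2 := by
  rcases eq_or_ne t 0 with rfl | ht
  · simpa using pow_pos (abs_pos.2 hσ) 2
  · positivity

theorem alphaCoef_eq_div {σ : ℝ} (hσ : σ ≠ 0) (t : ℝ) :
    alphaCoef σ t = (1 - t) / (t ^ 2 / σ ^ 2 + (1 - t) ^ 2) := by
  rw [alphaCoef, ← mul_div_mul_left (1 - t) _ (pow_ne_zero 2 hσ)]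
  congr 1
  field_simp

theorem alphaCoef_lt_alphaCoef {σ τ t : ℝ} (hσ : σ ≠ 0) (hστ : σ ^ 2 < τ ^ 2)
    (ht : t ∈ Set.Ioo (0 : ℝ) 1) : alphaCoef σ t < alphaCoef τ t := by
  obtain ⟨ht0, ht1⟩ := ht
  have hσ2 : 0 < σ ^ 2 := by positivity
  have hτ : τ ≠ 0 := by rintro rfl; linarith
  rw [alphaCoef_eq_div hσ, alphaCoef_eq_div hτ]
  refine div_lt_div_of_pos_left (by linarith) (by positivity) ?_
  gcongr

theorem alphaCoef_sub_taylor {σ : ℝ} (hσ : σ ≠ 0) (t : ℝ) :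
    alphaCoef σ t - (1 + t + (1 - (σ ^ 2)⁻¹) * t ^ 2)
      = -(3 - σ ^ 2 + (σ ^ 2 - (σ ^ 2)⁻¹) * t) / (t ^ 2 + (1 - t) ^ 2 * σ ^ 2) * t ^ 3 := by
  have hD := (alphaCoef_denom_pos hσ t).ne'
  rw [alphaCoef, sub_eq_iff_eq_add, div_mul_eq_mul_div, div_add' _ _ _ hD, div_eq_div_iff hD hD]
  field_simp
  ring

theorem alphaCoef_sub_taylor_isBigO {σ : ℝ} (hσ : σ ≠ 0) :
    (fun t => alphaCoef σ t - (1 + t + (1 - (σ ^ 2)⁻¹) * t ^ 2)) =O[nhds 0] fun t => t ^ 3 := by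
  simp_rw [alphaCoef_sub_taylor hσ]
  have hcont : ContinuousAt
      (fun t : ℝ => -(3 - σ ^ 2 + (σ ^ 2 - (σ ^ 2)⁻¹) * t) / (t ^ 2 + (1 - t) ^ 2 * σ ^ 2)) 0 :=
    ContinuousAt.div (by fun_prop) (by fun_prop) (alphaCoef_denom_pos hσ 0).ne'
  simpa using (hcont.tendsto.isBigO_one ℝ).mul (isBigO_refl (fun t : ℝ => t ^ 3) _)

/-- If `0 < σ < 1`, then `γ_t > α_t` for all `t ∈ (0,1)`, and as `t → 0⁺`,
`γ_t - α_t = t²(σ⁻² - 1) + O(t³)`. -/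
theorem gamma_gt_alpha (σ : ℝ) (hσ : 0 < σ) (hσ1 : σ < 1) :
    (∀ t ∈ Set.Ioo (0 : ℝ) 1, alphaCoef σ t < gammaCoef t)
    ∧ (fun t => gammaCoef t - alphaCoef σ t - t ^ 2 * ((σ ^ 2)⁻¹ - 1))
        =O[nhdsWithin 0 (Set.Ioi 0)] fun t => t ^ 3 := by
  refine ⟨fun t ht => ?_, ?_⟩
  · rw [gammaCoef_eq_alphaCoef_one]
    exact alphaCoef_lt_alphaCoef hσ.ne' (by nlinarith) ht
  · have hγ := alphaCoef_sub_taylor_isBigO one_ne_zero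
    have hα := alphaCoef_sub_taylor_isBigO hσ.ne'
    refine ((hγ.sub hα).mono nhdsWithin_le_nhds).congr_left fun t => ?_
    rw [gammaCoef_eq_alphaCoef_one]
    ring
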